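/- In the transductive Context-FTPL setup with linear losses, fix a sequence (x^1,ℓ^1),…,(x^T,ℓ^T) of contexts x^τ ∈ X and non-negative loss vectors ℓ^τ ∈ ℝ_{≥0}^K. For each t, with the same perturbation draw, let π^t (respectively π^{t+1}) be the smallest (tie-breaking order) minimizer over π ∈ Π of Σ_{τ=1}^{t−1} ⟨π(x^τ), ℓ^τ⟩ + Σ_{x ∈ X} ⟨π(x), ℓ_x⟩ (respectively the same sum including the term for τ = t). Then E[ ⟨π^t(x^t), ℓ^t⟩ − ⟨π^{t+1}(x^t), ℓ^t⟩ ] ≤ ε · E[ ⟨π^t(x^t), ℓ^t⟩² ], where expectations are over the i.i.d. Laplace(ε) perturbation. (Lemma: Multiplicative Stability for linear losses.) -/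

import Mathlib

open MeasureTheory Finset

/-- The i.i.d. product Laplace(ε) measure on `ι → ℝ`: density
`z ↦ ∏ i (ε/2)·exp(−ε|z i|)` with respect to Lebesgue measure. -/
noncomputable def laplacePi (ι : Type*) [Fintype ι] (ε : ℝ) :
    MeasureTheory.Measure (ι → ℝ) :=
  (MeasureTheory.volume : MeasureTheory.Measure (ι → ℝ)).withDensity
    fun z => ENNReal.ofReal (∏ i, ε / 2 * Real.exp (-ε * |z i|))

/-- `⟨a, v⟩` for `a ∈ {0,1}^K` (as a Boolean vector) and `v ∈ ℝ^K`. -/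
def dotp {K : ℕ} (a : Fin K → Bool) (v : Fin K → ℝ) : ℝ :=
  ∑ j, if a j then v j else 0

/-- The smallest (in the tie-breaking linear order) minimizer of `c` over the
finite nonempty policy set `P`. -/
noncomputable def argminTie {P : Type*} [Fintype P] [Nonempty P] [LinearOrder P]
    (c : P → ℝ) : P :=
  haveI := Classical.decPred fun p : P => ∀ q, c p ≤ c q
  (Finset.univ.filter fun p : P => ∀ q, c p ≤ c q).min' (by
    obtain ⟨p, -, hp⟩ := Finset.exists_min_image (Finset.univ : Finset P) c
      ⟨Classical.arbitrary P, Finset.mem_univ _⟩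
    exact ⟨p, Finset.mem_filter.mpr ⟨Finset.mem_univ _, fun q => hp q (Finset.mem_univ q)⟩⟩)


/-!
Write `v π = ⟨π(x^t), ℓ^t⟩` and let `e_π` be the perturbation vector carrying `ℓ^t(j)` at the
coordinates `(x^t, j)` with `π(x^t)(j) = 1` and `0` elsewhere. Translating the perturbation by
`e_π` adds exactly `v π` to the objective of `π` and at most the round-`t` loss to every other
policy, so it maps the event `{π^t = π}` into `{π^{t+1} = π}`. The Laplace density drops by at most
the factor `exp (-ε ‖e_π‖₁) = exp (-ε v π)` under the translation, hence
`P(π^{t+1} = π) ≥ (1 - ε v π) P(π^t = π)`; multiplying by `v π ≥ 0` and summing over `π` gives the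
claim.
-/

section Laplace

variable {ι : Type*} [Fintype ι] {ε : ℝ}

theorem integral_laplace_density (hε : 0 < ε) :
    ∫ x : ℝ, ε / 2 * Real.exp (-ε * |x|) = 1 := by
  rw [integral_comp_abs (f := fun y => ε / 2 * Real.exp (-ε * y)), integral_const_mul,
    integral_exp_mul_Ioi (neg_lt_zero.2 hε)]
  field_simp
  simp

theorem integrable_laplace_density (hε : 0 < ε) :
    Integrable fun x : ℝ => ε / 2 * Real.exp (-ε * |x|) :=
  .of_integral_ne_zero (by rw [integral_laplace_density hε]; exact one_ne_zero)

theorem isProbabilityMeasure_laplacePi (hε : 0 < ε) : IsProbabilityMeasure (laplacePi ι ε) := by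
  have hint : Integrable fun z : ι → ℝ => ∏ i, ε / 2 * Real.exp (-ε * |z i|) :=
    Integrable.fintype_prod fun _ => integrable_laplace_density hε
  constructor
  rw [laplacePi, withDensity_apply _ MeasurableSet.univ, Measure.restrict_univ,
    ← ofReal_integral_eq_lintegral_ofReal hint (.of_forall fun z => by positivity),
    integral_fintype_prod_volume_eq_prod (fun _ x => ε / 2 * Real.exp (-ε * |x|))]
  simp only [integral_laplace_density hε, prod_const_one, ENNReal.ofReal_one]

theorem laplace_density_add_le (hε : 0 < ε) (z e : ι → ℝ) :
    Real.exp (-ε * ∑ i, |e i|) * ∏ i, ε / 2 * Real.exp (-ε * |z i + e i|) ≤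
      ∏ i, ε / 2 * Real.exp (-ε * |z i|) := by
  rw [mul_sum, Real.exp_sum, ← prod_mul_distrib]
  refine prod_le_prod (fun i _ => by positivity) fun i _ => ?_
  rw [mul_left_comm, ← Real.exp_add]
  gcongr
  have htri : |z i| ≤ |z i + e i| + |e i| := by simpa using abs_add_le (z i + e i) (-e i)
  nlinarith

theorem laplacePi_preimage_add_ge (hε : 0 < ε) (e : ι → ℝ) {S : Set (ι → ℝ)}
    (hS : MeasurableSet S) :
    ENNReal.ofReal (Real.exp (-ε * ∑ i, |e i|)) * laplacePi ι ε S ≤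
      laplacePi ι ε ((· + e) ⁻¹' S) := by
  set D : (ι → ℝ) → ENNReal := fun z => ENNReal.ofReal (∏ i, ε / 2 * Real.exp (-ε * |z i|))
  have hD : Measurable D := by fun_prop
  have hS' : MeasurableSet ((· + e) ⁻¹' S) := hS.preimage (measurable_add_const e)
  rw [laplacePi, withDensity_apply _ hS, withDensity_apply _ hS', ← lintegral_indicator hS,
    ← lintegral_indicator hS', ← lintegral_const_mul _ (hD.indicator hS),
    ← lintegral_add_right_eq_self _ e]
  refine lintegral_mono fun z => ?_
  by_cases hz : z + e ∈ S
  · rw [Set.indicator_of_mem hz, Set.indicator_of_mem (show z ∈ (· + e) ⁻¹' S from hz),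
      ← ENNReal.ofReal_mul (Real.exp_nonneg _)]
    exact ENNReal.ofReal_le_ofReal (by simpa using laplace_density_add_le hε z e)
  · simp [Set.indicator_of_notMem hz]

end Laplace

section ArgminTie

variable {P : Type*} [Fintype P] [Nonempty P] [LinearOrder P]

theorem argminTie_eq_iff (c : P → ℝ) (π : P) :
    argminTie c = π ↔ (∀ q, c π ≤ c q) ∧ ∀ p, (∀ q, c p ≤ c q) → π ≤ p := by
  simp only [argminTie, Finset.min'_eq_iff, mem_filter, mem_univ, true_and]

theorem argminTie_eq_of_le_of_eq {c c' : P → ℝ} {π : P} (hle : ∀ p, c p ≤ c' p)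
    (heq : c' π = c π) (h : argminTie c = π) : argminTie c' = π := by
  rw [argminTie_eq_iff] at h ⊢
  obtain ⟨hmin, hleast⟩ := h
  refine ⟨fun q => heq ▸ (hmin q).trans (hle q), fun p hp => hleast p fun q => ?_⟩
  calc c p ≤ c' p := hle p
    _ ≤ c' π := hp π
    _ = c π := heq
    _ ≤ c q := hmin q

theorem measurableSet_argminTie_eq {α : Type*} [MeasurableSpace α] {c : P → α → ℝ}
    (hc : ∀ p, Measurable (c p)) (π : P) :
    MeasurableSet {z | argminTie (c · z) = π} := by
  have hset : {z | argminTie (c · z) = π} =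
      (⋂ q, {z | c π z ≤ c q z}) ∩ ⋂ p, (⋂ q, {z | c p z ≤ c q z})ᶜ ∪ {_z | π ≤ p} := by
    ext z
    simp only [Set.mem_ofPred_eq, Set.mem_inter_iff, Set.mem_iInter, Set.mem_union,
      Set.mem_compl_iff, argminTie_eq_iff, imp_iff_not_or]
  rw [hset]
  refine .inter (.iInter fun q => measurableSet_le (hc π) (hc q)) (.iInter fun p => ?_)
  exact (MeasurableSet.iInter fun q => measurableSet_le (hc p) (hc q)).compl.union
    (.const _)

end ArgminTie

section Fibres

variable {α P : Type*} [Fintype P]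

theorem apply_eq_sum_indicator_fiber (f : α → P) (w : P → ℝ) (z : α) :
    w (f z) = ∑ π, {z | f z = π}.indicator (fun _ => w π) z := by
  classical
  simp [Set.indicator_apply]

variable [MeasurableSpace α] {μ : Measure α} [IsFiniteMeasure μ] {f : α → P}

theorem integrable_comp_of_measurableSet_fiber (hf : ∀ π, MeasurableSet {z | f z = π})
    (w : P → ℝ) : Integrable (fun z => w (f z)) μ := by
  simp_rw [apply_eq_sum_indicator_fiber f w]
  exact integrable_finsetSum _ fun π _ => (integrable_const (w π)).indicator (hf π)

theorem integral_comp_eq_sum_fiber (hf : ∀ π, MeasurableSet {z | f z = π}) (w : P → ℝ) :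
    ∫ z, w (f z) ∂μ = ∑ π, μ.real {z | f z = π} * w π := by
  simp_rw [apply_eq_sum_indicator_fiber f w]
  rw [integral_finsetSum _ fun π _ =>
    (integrable_const (w π)).indicator (hf π)]
  exact sum_congr rfl fun π _ => integral_indicator_const _ (hf π)

end Fibres

theorem mul_sub_mul_le_of_exp_mul_le {ε v a b : ℝ} (hv : 0 ≤ v) (ha : 0 ≤ a)
    (h : Real.exp (-ε * v) * a ≤ b) : a * v - b * v ≤ ε * (a * v ^ 2) := by
  have hlin : (1 - ε * v) * a ≤ b :=
    (mul_le_mul_of_nonneg_right (by linarith [Real.add_one_le_exp (-ε * v)]) ha).trans h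
  nlinarith [mul_le_mul_of_nonneg_right hlin hv]

section Stability

variable {ι P : Type*} [Fintype ι] [Fintype P] [Nonempty P] [LinearOrder P] {ε : ℝ}
  {c c' : P → (ι → ℝ) → ℝ}

theorem laplacePi_argminTie_shift_ge (hε : 0 < ε) (hc : ∀ p, Measurable (c p)) {π : P}
    {e : ι → ℝ} (hshift : ∀ p z, c p (z + e) ≤ c' p z) (heq : ∀ z, c' π z = c π (z + e)) :
    ENNReal.ofReal (Real.exp (-ε * ∑ i, |e i|)) * laplacePi ι ε {z | argminTie (c · z) = π} ≤
      laplacePi ι ε {z | argminTie (c' · z) = π} :=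
  (laplacePi_preimage_add_ge hε e (measurableSet_argminTie_eq hc π)).trans <|
    measure_mono fun z hz => argminTie_eq_of_le_of_eq (fun p => hshift p z) (heq z) hz

theorem integral_sub_argminTie_le (hε : 0 < ε) (hc : ∀ p, Measurable (c p))
    (hc' : ∀ p, Measurable (c' p)) {v : P → ℝ} (hv : ∀ p, 0 ≤ v p) (e : P → ι → ℝ)
    (he : ∀ π, ∑ i, |e π i| ≤ v π) (hshift : ∀ π p z, c p (z + e π) ≤ c' p z)
    (heq : ∀ π z, c' π z = c π (z + e π)) :
    ∫ z, (v (argminTie (c · z)) - v (argminTie (c' · z))) ∂laplacePi ι ε ≤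
      ε * ∫ z, v (argminTie (c · z)) ^ 2 ∂laplacePi ι ε := by
  have := isProbabilityMeasure_laplacePi (ι := ι) hε
  have hfib := measurableSet_argminTie_eq hc
  have hfib' := measurableSet_argminTie_eq hc'
  rw [integral_sub (integrable_comp_of_measurableSet_fiber hfib v)
      (integrable_comp_of_measurableSet_fiber hfib' v),
    integral_comp_eq_sum_fiber hfib, integral_comp_eq_sum_fiber hfib',
    integral_comp_eq_sum_fiber hfib (fun p => v p ^ 2), ← sum_sub_distrib, mul_sum]
  gcongr with π
  refine mul_sub_mul_le_of_exp_mul_le (hv π) measureReal_nonneg ?_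
  have hmass := ENNReal.toReal_mono (measure_ne_top _ _)
    (laplacePi_argminTie_shift_ge hε hc (hshift π) (heq π))
  rw [ENNReal.toReal_mul, ENNReal.toReal_ofReal (Real.exp_nonneg _)] at hmass
  refine le_trans (mul_le_mul_of_nonneg_right (Real.exp_le_exp.2 ?_) measureReal_nonneg) hmass
  nlinarith [he π]

end Stability

section LinearLoss

variable {X : Type*} [Fintype X] {K : ℕ}

def maskBy (a : Fin K → Bool) (v : Fin K → ℝ) : Fin K → ℝ := fun j => if a j then v j else 0

def perturbLoss (a : X → Fin K → Bool) (z : X × Fin K → ℝ) : ℝ :=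
  ∑ x, dotp (a x) fun j => z (x, j)

theorem dotp_add (a : Fin K → Bool) (u v : Fin K → ℝ) :
    dotp a (u + v) = dotp a u + dotp a v := by
  simp only [dotp, Pi.add_apply, ← sum_add_distrib]
  exact sum_congr rfl fun j _ => by split_ifs <;> simp

theorem dotp_zero (a : Fin K → Bool) : dotp a 0 = 0 := by
  simp [dotp]

theorem dotp_mono (a : Fin K → Bool) {u v : Fin K → ℝ} (h : u ≤ v) : dotp a u ≤ dotp a v :=
  sum_le_sum fun j _ => by split_ifs <;> simp [h j]

theorem dotp_nonneg (a : Fin K → Bool) {v : Fin K → ℝ} (hv : 0 ≤ v) : 0 ≤ dotp a v :=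
  dotp_zero a ▸ dotp_mono a hv

theorem maskBy_le (a : Fin K → Bool) {v : Fin K → ℝ} (hv : 0 ≤ v) : maskBy a v ≤ v :=
  fun j => by unfold maskBy; split_ifs; exacts [le_rfl, hv j]

theorem dotp_maskBy_self (a : Fin K → Bool) (v : Fin K → ℝ) : dotp a (maskBy a v) = dotp a v :=
  sum_congr rfl fun j _ => by simp only [maskBy]; split_ifs <;> rfl

theorem sum_abs_maskBy (a : Fin K → Bool) {v : Fin K → ℝ} (hv : 0 ≤ v) :
    ∑ j, |maskBy a v j| = dotp a v :=
  sum_congr rfl fun j _ => by simp only [maskBy]; split_ifs <;> simp [abs_of_nonneg (hv j)]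

theorem measurable_perturbLoss (a : X → Fin K → Bool) : Measurable (perturbLoss a) := by
  refine Finset.measurable_sum _ fun x _ => Finset.measurable_sum _ fun j _ => ?_
  split_ifs
  exacts [measurable_pi_apply _, measurable_const]

variable [DecidableEq X]

theorem sum_abs_uncurry_single (x : X) (u : Fin K → ℝ) :
    ∑ i, |Function.uncurry (Pi.single x u) i| = ∑ j, |u j| := by
  rw [Fintype.sum_prod_type, Fintype.sum_eq_single x fun y hy => by simp [hy]]
  simp

theorem perturbLoss_add_uncurry_single (a : X → Fin K → Bool) (z : X × Fin K → ℝ) (x : X)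
    (u : Fin K → ℝ) :
    perturbLoss a (z + Function.uncurry (Pi.single x u)) = perturbLoss a z + dotp (a x) u := by
  have hsplit : ∀ y, (dotp (a y) fun j => (z + Function.uncurry (Pi.single x u)) (y, j)) =
      (dotp (a y) fun j => z (y, j)) + dotp (a y) (Pi.single (M := fun _ => Fin K → ℝ) x u y) :=
    fun y => dotp_add (a y) _ _
  rw [perturbLoss, perturbLoss, sum_congr rfl fun y _ => hsplit y, sum_add_distrib,
    add_right_inj, Fintype.sum_eq_single x fun y hy => by rw [Pi.single_eq_of_ne hy, dotp_zero],
    Pi.single_eq_same]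

end LinearLoss

theorem multiplicative_stability_linear_general
    {X P : Type*} [Fintype X] [Fintype P] [Nonempty P] [LinearOrder P]
    {K : ℕ}
    (pol : P → X → Fin K → Bool)
    {ε : ℝ} (hε : 0 < ε)
    (xs : ℕ → X) (ℓ : ℕ → Fin K → ℝ) (hℓ : ∀ τ j, 0 ≤ ℓ τ j)
    (t : ℕ) :
    (∫ z, (dotp (pol (argminTie fun p : P =>
            (∑ τ ∈ Finset.range t, dotp (pol p (xs τ)) (ℓ τ)) +
              ∑ xc : X, dotp (pol p xc) fun j => z (xc, j)) (xs t)) (ℓ t) -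
          dotp (pol (argminTie fun p : P =>
            (∑ τ ∈ Finset.range (t + 1), dotp (pol p (xs τ)) (ℓ τ)) +
              ∑ xc : X, dotp (pol p xc) fun j => z (xc, j)) (xs t)) (ℓ t))
        ∂(laplacePi (X × Fin K) ε)) ≤
      ε * ∫ z, (dotp (pol (argminTie fun p : P =>
            (∑ τ ∈ Finset.range t, dotp (pol p (xs τ)) (ℓ τ)) +
              ∑ xc : X, dotp (pol p xc) fun j => z (xc, j)) (xs t)) (ℓ t)) ^ 2
        ∂(laplacePi (X × Fin K) ε) := by
  classical
  have hℓt : 0 ≤ ℓ t := hℓ t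
  refine integral_sub_argminTie_le (v := fun p => dotp (pol p (xs t)) (ℓ t))
    (c := fun p z => (∑ τ ∈ range t, dotp (pol p (xs τ)) (ℓ τ)) + perturbLoss (pol p) z)
    (c' := fun p z => (∑ τ ∈ range (t + 1), dotp (pol p (xs τ)) (ℓ τ)) + perturbLoss (pol p) z)
    hε (fun p => measurable_const.add (measurable_perturbLoss _))
    (fun p => measurable_const.add (measurable_perturbLoss _)) (fun p => dotp_nonneg _ hℓt)
    (fun π => Function.uncurry (Pi.single (xs t) (maskBy (pol π (xs t)) (ℓ t))))
    (fun π => ((sum_abs_uncurry_single _ _).trans (sum_abs_maskBy _ hℓt)).le) ?_ ?_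
  · intro π p z
    simp only [perturbLoss_add_uncurry_single, sum_range_succ]
    linarith [dotp_mono (pol p (xs t)) (maskBy_le (pol π (xs t)) hℓt)]
  · intro π z
    simp only [perturbLoss_add_uncurry_single, sum_range_succ, dotp_maskBy_self]
    ring

/-- **Multiplicative Stability for linear losses.** In the transductive
Context-FTPL setup with non-negative linear losses `ℓ^τ ∈ ℝ_{≥0}^K`, for any
round `t < T`,
`E[⟨π^t(x^t), ℓ^t⟩ − ⟨π^{t+1}(x^t), ℓ^t⟩] ≤ ε · E[⟨π^t(x^t), ℓ^t⟩²]`,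
where `π^t` (resp. `π^{t+1}`) is the tie-broken minimizer of the perturbed
cumulative loss over the first `t` (resp. `t+1`) rounds, under the same
i.i.d. Laplace(ε) perturbation draw. -/
theorem multiplicative_stability_linear
    {X P : Type*} [Fintype X] [Fintype P] [Nonempty P] [LinearOrder P]
    {K m d N : ℕ} (hK : 1 ≤ K) (hm : 1 ≤ m)
    (hd : Fintype.card X = d) (hN : Fintype.card P = N) (hN2 : 2 ≤ N)
    (pol : P → X → Fin K → Bool)
    (hsparse : ∀ p x, (Finset.univ.filter fun j => pol p x j = true).card ≤ m)
    {ε : ℝ} (hε : 0 < ε)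
    (T : ℕ) (xs : ℕ → X) (ℓ : ℕ → Fin K → ℝ) (hℓ : ∀ τ j, 0 ≤ ℓ τ j)
    (t : ℕ) (ht : t < T) :
    (∫ z, (dotp (pol (argminTie fun p : P =>
            (∑ τ ∈ Finset.range t, dotp (pol p (xs τ)) (ℓ τ)) +
              ∑ xc : X, dotp (pol p xc) fun j => z (xc, j)) (xs t)) (ℓ t) -
          dotp (pol (argminTie fun p : P =>
            (∑ τ ∈ Finset.range (t + 1), dotp (pol p (xs τ)) (ℓ τ)) +
              ∑ xc : X, dotp (pol p xc) fun j => z (xc, j)) (xs t)) (ℓ t))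
        ∂(laplacePi (X × Fin K) ε)) ≤
      ε * ∫ z, (dotp (pol (argminTie fun p : P =>
            (∑ τ ∈ Finset.range t, dotp (pol p (xs τ)) (ℓ τ)) +
              ∑ xc : X, dotp (pol p xc) fun j => z (xc, j)) (xs t)) (ℓ t)) ^ 2
        ∂(laplacePi (X × Fin K) ε) :=
  multiplicative_stability_linear_general pol hε xs ℓ hℓ t
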